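/- Let B be a Garside shadow in (W,S) and let g ∈ W. Set w = π_B(g⁻¹) and b = π_B((ν_B(g))⁻¹). Then w ⪯ wb ⪯ g⁻¹ and π_B(wb) = w. -/
import Mathlib


open CoxeterSystem

variable {ι W : Type} [Group W] {cm : CoxeterMatrix ι}

/-- The right weak order on `W`: `g ⪯ h` iff `ℓ(g) + ℓ(g⁻¹h) = ℓ(h)`. -/
def WLe (cs : CoxeterSystem cm W) (g h : W) : Prop :=
  cs.length g + cs.length (g⁻¹ * h) = cs.length h

/-- `w` is a suffix of `g` if `g = u * w` with `ℓ(g) = ℓ(u) + ℓ(w)`. -/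
def IsSuffixOf (cs : CoxeterSystem cm W) (w g : W) : Prop :=
  ∃ u : W, g = u * w ∧ cs.length g = cs.length u + cs.length w

/-- `j` is the join (least upper bound) of `X` with respect to the right weak order. -/
def IsJoin (cs : CoxeterSystem cm W) (X : Set W) (j : W) : Prop :=
  (∀ x ∈ X, WLe cs x j) ∧ ∀ u : W, (∀ x ∈ X, WLe cs x u) → WLe cs j u

/-- A Garside shadow: a subset of `W` containing all simple reflections, closed under
existing joins and under taking suffixes. -/
def IsGarsideShadow (cs : CoxeterSystem cm W) (B : Set W) : Prop :=
  (∀ i : ι, cs.simple i ∈ B) ∧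
  (∀ X : Set W, X ⊆ B → ∀ j : W, IsJoin cs X j → j ∈ B) ∧
  (∀ b ∈ B, ∀ w : W, IsSuffixOf cs w b → w ∈ B)

/-- `π` is the `B`-projection: `π g` is the join of `{b ∈ B : b ⪯ g}` and lies in `B`. -/
def IsGarsideProjection (cs : CoxeterSystem cm W) (B : Set W) (π : W → W) : Prop :=
  ∀ g : W, π g ∈ B ∧ IsJoin cs {b : W | b ∈ B ∧ WLe cs b g} (π g)

/-- The voracious projection with respect to `π = π_B`: `ν_B(g) = g · π_B(g⁻¹)`. -/
def vor (π : W → W) (g : W) : W := g * π g⁻¹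

/-- The language `L_g`, defined inductively: `L_id = {ε}` and
`L_g = {uv : u ∈ L_{ν_B(g)}, v a minimal length word representing ν_B(g)⁻¹g}`. -/
inductive VorL (cs : CoxeterSystem cm W) (π : W → W) : W → List ι → Prop
  | nil : VorL cs π 1 []
  | step {g : W} {u v : List ι} (hg : g ≠ 1) (hu : VorL cs π (vor π g) u)
      (hv : cs.wordProd v = (vor π g)⁻¹ * g)
      (hmin : v.length = cs.length ((vor π g)⁻¹ * g)) :
      VorL cs π g (u ++ v)

/-- The voracious language `V_B = ⋃_{g ∈ W} L_g`. -/
def VorLang (cs : CoxeterSystem cm W) (π : W → W) : Language ι :=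
  {v : List ι | ∃ g : W, VorL cs π g v}

/-- The reflection `r` separates `g` from `h`. -/
def SepElem (cs : CoxeterSystem cm W) (r g h : W) : Prop :=
  Xor' (cs.length (r * g) < cs.length g) (cs.length (r * h) < cs.length h)

/-- The reflection `r'` separates `g` from the wall of the reflection `r`. -/
def SepWall (cs : CoxeterSystem cm W) (r' g r : W) : Prop :=
  ∀ h : W, (∃ i : ι, r * h = h * cs.simple i) → SepElem cs r' g h

/-- The wall of the reflection `r` is `m`-close to `g`: at most `m` reflections
separate `g` from the wall of `r`. -/
def MClose (cs : CoxeterSystem cm W) (m : ℕ) (g r : W) : Prop :=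
  ∃ F : Finset W, F.card ≤ m ∧
    ∀ r' : W, cs.IsReflection r' → SepWall cs r' g r → r' ∈ F


lemma wle_trans (cs : CoxeterSystem cm W) {x y z : W} (h1 : WLe cs x y) (h2 : WLe cs y z) :
    WLe cs x z := by
  unfold WLe at *
  have t1 : cs.length (x⁻¹ * z) ≤ cs.length (x⁻¹ * y) + cs.length (y⁻¹ * z) := by
    have := cs.length_mul_le (x⁻¹ * y) (y⁻¹ * z)
    simpa [mul_assoc] using this
  have t2 : cs.length z ≤ cs.length x + cs.length (x⁻¹ * z) := by
    have := cs.length_mul_le x (x⁻¹ * z)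
    simpa [mul_assoc] using this
  omega

lemma wle_antisymm (cs : CoxeterSystem cm W) {x y : W} (h1 : WLe cs x y) (h2 : WLe cs y x) :
    x = y := by
  unfold WLe at *
  have hz : cs.length (x⁻¹ * y) = 0 := by
    have : cs.length (y⁻¹ * x) = cs.length (x⁻¹ * y) := by
      rw [← cs.length_inv (y⁻¹ * x)]; simp
    omega
  have h := cs.length_eq_zero_iff.mp hz
  have : x * (x⁻¹ * y) = x * 1 := by rw [h]
  simpa using this.symm

/-- With `w = π_B(g⁻¹)` and `b = π_B((ν_B(g))⁻¹)`, we have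
`w ⪯ wb ⪯ g⁻¹` and `π_B(wb) = w`. -/
theorem proj_edge_exists [Finite ι] (cs : CoxeterSystem cm W)
    (B : Set W) (hB : IsGarsideShadow cs B)
    (piB : W → W) (hpi : IsGarsideProjection cs B piB)
    (g : W) :
    WLe cs (piB g⁻¹) (piB g⁻¹ * piB (vor piB g)⁻¹) ∧
    WLe cs (piB g⁻¹ * piB (vor piB g)⁻¹) g⁻¹ ∧
    piB (piB g⁻¹ * piB (vor piB g)⁻¹) = piB g⁻¹ := by
  set w := piB g⁻¹ with hw_def
  have hvinv : (vor piB g)⁻¹ = w⁻¹ * g⁻¹ := by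
    simp [vor, mul_inv_rev, hw_def]
  set b := piB (vor piB g)⁻¹ with hb_def
  -- w ⪯ g⁻¹
  have hw : WLe cs w g⁻¹ :=
    (hpi g⁻¹).2.2 g⁻¹ (fun x hx => hx.2)
  -- b ⪯ w⁻¹ g⁻¹
  have hb : WLe cs b (w⁻¹ * g⁻¹) := by
    have h := (hpi (vor piB g)⁻¹).2.2 (vor piB g)⁻¹ (fun x hx => hx.2)
    rw [hb_def, ← hvinv]
    exact h
  unfold WLe at hw hb
  -- Claim 1 : ℓ(w) + ℓ(b) = ℓ(w*b)
  have t1 : cs.length (w * b) ≤ cs.length w + cs.length b := cs.length_mul_le w b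
  have t2 : cs.length g⁻¹ ≤ cs.length (w * b) + cs.length (b⁻¹ * (w⁻¹ * g⁻¹)) := by
    have := cs.length_mul_le (w * b) (b⁻¹ * (w⁻¹ * g⁻¹))
    simpa [mul_assoc] using this
  have claim1 : WLe cs w (w * b) := by
    unfold WLe
    simp only [inv_mul_cancel_left]
    omega
  have claim2 : WLe cs (w * b) g⁻¹ := by
    unfold WLe
    have e : (w * b)⁻¹ * g⁻¹ = b⁻¹ * (w⁻¹ * g⁻¹) := by group
    rw [e]
    have h1 : cs.length (w * b) = cs.length w + cs.length b := by
      have := claim1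
      unfold WLe at this
      simp only [inv_mul_cancel_left] at this
      omega
    omega
  refine ⟨claim1, claim2, ?_⟩
  -- Claim 3 : π(wb) = w
  have hwB : w ∈ B := (hpi g⁻¹).1
  -- w ⪯ π(wb)
  have h1 : WLe cs w (piB (w * b)) :=
    (hpi (w * b)).2.1 w ⟨hwB, claim1⟩
  -- π(wb) ⪯ w : w is an upper bound of {c ∈ B : c ⪯ wb}
  have h2 : WLe cs (piB (w * b)) w := by
    refine (hpi (w * b)).2.2 w (fun x hx => ?_)
    exact (hpi g⁻¹).2.1 x ⟨hx.1, wle_trans cs hx.2 claim2⟩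
  exact wle_antisymm cs h2 h1
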